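/- arXiv:2107.01135 — 4 statements merged into one kernel-verified Lean document; each statement's English description precedes it below -/
import Mathlib

section
/- For α ∈ (0,1) and c ≥ 0, the Mittag-Leffler function u(t) = E_α(−c t^α) = Σ_{k≥0} (−c t^α)^k / Γ(αk+1) satisfies the fractional relaxation equation D^α_t u(t) = −c u(t) for t > 0 with u(0) = 1, where D^α_t is the Caputo derivative. -/
/-!
Expanding `E_α(a r^α) = Σ a^k r^(αk) / Γ(αk+1)` and differentiating termwise turns the Caputo
integrand into a series of Beta integrals
`∫₀ᵗ s^(p-1) (t-s)^(-α) ds = Γ(p) Γ(1-α) / Γ(p-α+1) · t^(p-α)` with `p = α(k+1)`; the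
`(k+1)`-st term then integrates to `Γ(1-α) · a` times the `k`-th term of `E_α(a t^α)`.
Termwise differentiation and integration are justified because `y^k ≤ Γ(αk+1)` eventually for
every `y`, so all the series involved converge absolutely.
-/

open MeasureTheory Set

/-- The Mittag-Leffler function `E_α(z) = Σ_{k≥0} z^k / Γ(αk+1)`. -/
noncomputable def mittagLeffler (α z : ℝ) : ℝ :=
  ∑' k : ℕ, z ^ k / Real.Gamma (α * k + 1)

open Filter Real

section GammaGrowth

variable {α : ℝ}

lemma factorial_floor_le_Gamma_add_one {x : ℝ} (hx : 1 ≤ x) :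
    (⌊x⌋₊.factorial : ℝ) ≤ Gamma (x + 1) := by
  rw [← Gamma_nat_eq_factorial]
  have hfloor : (1 : ℝ) ≤ ⌊x⌋₊ := by exact_mod_cast Nat.le_floor (by exact_mod_cast hx)
  exact Gamma_strictMonoOn_Ici.monotoneOn (by simp only [mem_Ici]; linarith)
    (by simp only [mem_Ici]; linarith) (by linarith [Nat.floor_le (zero_le_one.trans hx)])

lemma eventually_pow_succ_le_factorial (w : ℝ) :
    ∀ᶠ n : ℕ in atTop, w ^ (n + 1) ≤ n.factorial := by
  have h := (FloorSemiring.tendsto_pow_div_factorial_atTop w).const_mul w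
  rw [mul_zero] at h
  filter_upwards [h.eventually_le_const zero_lt_one] with n hn
  rwa [← mul_div_assoc, ← pow_succ', div_le_one (by positivity)] at hn

lemma eventually_pow_le_Gamma (hα : 0 < α) (y : ℝ) :
    ∀ᶠ k : ℕ in atTop, y ^ k ≤ Gamma (α * k + 1) := by
  set z := max |y| 1
  set w := z ^ α⁻¹
  have hw : 1 ≤ w := one_le_rpow (le_max_right _ _) (inv_nonneg.2 hα.le)
  have hαk : Tendsto (fun k : ℕ => α * k) atTop atTop :=
    tendsto_natCast_atTop_atTop.const_mul_atTop hα
  filter_upwards [hαk.eventually_ge_atTop 1,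
    (tendsto_nat_floor_atTop.comp hαk).eventually (eventually_pow_succ_le_factorial w)]
    with k hk hfac
  calc y ^ k ≤ |y| ^ k := (le_abs_self _).trans (abs_pow y k).le
    _ ≤ z ^ k := pow_le_pow_left₀ (abs_nonneg y) (le_max_left _ _) k
    _ = w ^ (α * k) := by
      rw [rpow_mul_natCast (by positivity), rpow_inv_rpow (by positivity) hα.ne']
    _ ≤ w ^ (⌊α * k⌋₊ + 1 : ℝ) := rpow_le_rpow_of_exponent_le hw (Nat.lt_floor_add_one _).le
    _ = w ^ (⌊α * k⌋₊ + 1) := by exact_mod_cast rpow_natCast w (⌊α * k⌋₊ + 1)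
    _ ≤ (⌊α * k⌋₊).factorial := hfac
    _ ≤ Gamma (α * k + 1) := factorial_floor_le_Gamma_add_one hk

lemma summable_pow_div_Gamma (hα : 0 < α) (z : ℝ) :
    Summable fun k : ℕ => z ^ k / Gamma (α * k + 1) := by
  refine summable_geometric_two.of_norm_bounded_eventually ?_
  rw [Nat.cofinite_eq_atTop]
  filter_upwards [eventually_pow_le_Gamma hα (2 * |z|)] with k hk
  have hΓ : 0 < Gamma (α * k + 1) := Gamma_pos_of_pos (by positivity)
  rw [norm_div, norm_pow, norm_of_nonneg hΓ.le, div_le_iff₀ hΓ, Real.norm_eq_abs]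
  calc |z| ^ k = (1 / 2) ^ k * (2 * |z|) ^ k := by rw [← mul_pow]; ring_nf
    _ ≤ (1 / 2) ^ k * Gamma (α * k + 1) := by gcongr

lemma summable_natCast_mul_pow_div_Gamma (hα : 0 < α) (z : ℝ) :
    Summable fun k : ℕ => k * z ^ k / Gamma (α * k + 1) := by
  refine (summable_pow_div_Gamma hα (2 * |z|)).of_norm_bounded fun k => ?_
  have hΓ : 0 < Gamma (α * k + 1) := Gamma_pos_of_pos (by positivity)
  have hk : (k : ℝ) ≤ 2 ^ k := by exact_mod_cast Nat.lt_two_pow_self.le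
  rw [norm_div, norm_mul, norm_pow, norm_of_nonneg hΓ.le, Real.norm_eq_abs, Real.norm_eq_abs,
    Nat.abs_cast, mul_pow]
  gcongr

end GammaGrowth

section Beta

variable {p q t : ℝ}

lemma ofReal_cpow_mul_one_sub_cpow {x : ℝ} (hx : x ∈ Icc (0 : ℝ) 1) :
    (x : ℂ) ^ ((p : ℂ) - 1) * (1 - (x : ℂ)) ^ ((q : ℂ) - 1) =
      ((x ^ (p - 1) * (1 - x) ^ (q - 1) : ℝ) : ℂ) := by
  rw [Complex.ofReal_mul, Complex.ofReal_cpow hx.1, Complex.ofReal_cpow (sub_nonneg.2 hx.2)]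
  push_cast
  rfl

lemma intervalIntegrable_rpow_mul_one_sub_rpow (hp : 0 < p) (hq : 0 < q) :
    IntervalIntegrable (fun x : ℝ => x ^ (p - 1) * (1 - x) ^ (q - 1)) volume 0 1 := by
  have hβ := Complex.betaIntegral_convergent (u := p) (v := q) (by simpa using hp)
    (by simpa using hq)
  rw [intervalIntegrable_iff_integrableOn_Ioc_of_le zero_le_one] at hβ ⊢
  refine IntegrableOn.congr_fun hβ.re (fun x hx => ?_) measurableSet_Ioc
  simp only [ofReal_cpow_mul_one_sub_cpow (Ioc_subset_Icc_self hx), RCLike.re_to_complex,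
    Complex.ofReal_re]

lemma integral_rpow_mul_one_sub_rpow (hp : 0 < p) (hq : 0 < q) :
    ∫ x in (0 : ℝ)..1, x ^ (p - 1) * (1 - x) ^ (q - 1) = Gamma p * Gamma q / Gamma (p + q) := by
  have hβ : Complex.betaIntegral p q =
      ((∫ x in (0 : ℝ)..1, x ^ (p - 1) * (1 - x) ^ (q - 1) : ℝ) : ℂ) := by
    rw [Complex.betaIntegral, ← intervalIntegral.integral_ofReal]
    refine intervalIntegral.integral_congr fun x hx => ?_
    rw [uIcc_of_le zero_le_one] at hx
    exact ofReal_cpow_mul_one_sub_cpow hx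
  have key := Complex.Gamma_mul_Gamma_eq_betaIntegral (s := p) (t := q) (by simpa using hp)
    (by simpa using hq)
  rw [hβ, ← Complex.ofReal_add, Complex.Gamma_ofReal, Complex.Gamma_ofReal,
    Complex.Gamma_ofReal] at key
  rw [eq_div_iff (Gamma_pos_of_pos (add_pos hp hq)).ne', mul_comm]
  exact_mod_cast key.symm

lemma rpow_mul_sub_rpow_eq (ht : 0 < t) {s : ℝ} (hs : s ∈ Icc 0 t) :
    s ^ (p - 1) * (t - s) ^ (q - 1) =
      t ^ (p + q - 2) * ((s / t) ^ (p - 1) * (1 - s / t) ^ (q - 1)) := by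
  rw [one_sub_div ht.ne', div_rpow hs.1 ht.le, div_rpow (sub_nonneg.2 hs.2) ht.le,
    show p + q - 2 = (p - 1) + (q - 1) by ring, rpow_add ht]
  field_simp

lemma integrableOn_rpow_mul_sub_rpow (hp : 0 < p) (hq : 0 < q) (ht : 0 < t) :
    IntegrableOn (fun s : ℝ => s ^ (p - 1) * (t - s) ^ (q - 1)) (Ioo 0 t) := by
  have hscaled : IntervalIntegrable (fun s : ℝ => (s / t) ^ (p - 1) * (1 - s / t) ^ (q - 1))
      volume 0 t := by
    simpa [div_eq_mul_inv, ht.ne'] using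
      (intervalIntegrable_rpow_mul_one_sub_rpow hp hq).comp_mul_right (c := t⁻¹)
  rw [intervalIntegrable_iff_integrableOn_Ioc_of_le ht.le] at hscaled
  refine (IntegrableOn.congr_fun (hscaled.const_mul (t ^ (p + q - 2))) (fun s hs => ?_)
    measurableSet_Ioc).mono_set Ioo_subset_Ioc_self
  exact (rpow_mul_sub_rpow_eq ht (Ioc_subset_Icc_self hs)).symm

lemma integral_rpow_mul_sub_rpow (hp : 0 < p) (hq : 0 < q) (ht : 0 < t) :
    ∫ s in Ioo 0 t, s ^ (p - 1) * (t - s) ^ (q - 1) =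
      Gamma p * Gamma q / Gamma (p + q) * t ^ (p + q - 1) := by
  rw [← integral_Ioc_eq_integral_Ioo, ← intervalIntegral.integral_of_le ht.le,
    intervalIntegral.integral_congr fun s hs => rpow_mul_sub_rpow_eq ht
      (by rwa [uIcc_of_le ht.le] at hs),
    intervalIntegral.integral_const_mul,
    intervalIntegral.integral_comp_div (fun x => x ^ (p - 1) * (1 - x) ^ (q - 1)) ht.ne',
    zero_div, div_self ht.ne', integral_rpow_mul_one_sub_rpow hp hq, smul_eq_mul,
    show p + q - 1 = (p + q - 2) + 1 by ring, rpow_add_one ht.ne']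
  ring

end Beta

section Series

variable {α : ℝ}

lemma mittagLeffler_zero (α : ℝ) : mittagLeffler α 0 = 1 := by
  rw [mittagLeffler, tsum_eq_single 0 fun k hk => by simp [zero_pow hk]]
  simp

lemma hasSum_mittagLeffler_mul_rpow (hα : 0 < α) (a : ℝ) {r : ℝ} (hr : 0 ≤ r) :
    HasSum (fun k : ℕ => a ^ k * (r ^ (α * k) / Gamma (α * k + 1)))
      (mittagLeffler α (a * r ^ α)) := by
  rw [mittagLeffler]
  convert (summable_pow_div_Gamma hα (a * r ^ α)).hasSum using 2 with k
  rw [mul_pow, ← rpow_mul_natCast hr, mul_div_assoc]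

lemma hasSum_mittagLeffler_mul_rpow_sub_one (hα : 0 < α) (a : ℝ) {r : ℝ} (hr : 0 ≤ r) :
    HasSum (fun k : ℕ => a ^ (k + 1) * (r ^ (α * (k + 1)) / Gamma (α * (k + 1) + 1)))
      (mittagLeffler α (a * r ^ α) - 1) := by
  have h := (hasSum_nat_add_iff' 1).2 (hasSum_mittagLeffler_mul_rpow hα a hr)
  push_cast at h
  simpa only [Finset.sum_range_one, CharP.cast_eq_zero, mul_zero, pow_zero, rpow_zero,
    zero_add, Gamma_one, div_one, one_mul] using h

lemma hasDerivAt_rpow_div_Gamma_add_one {p r : ℝ} (hp : p ≠ 0) (hr : 0 < r) :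
    HasDerivAt (fun x => x ^ p / Gamma (p + 1)) (r ^ (p - 1) / Gamma p) r := by
  refine ((hasDerivAt_rpow_const (p := p) (Or.inl hr.ne')).div_const _).congr_deriv ?_
  rw [Gamma_add_one hp, mul_div_mul_left _ _ hp]

lemma rpow_sub_one_div_Gamma_le {p r ρ R : ℝ} (hp : 0 < p) (hρ : 0 < ρ) (hρr : ρ ≤ r)
    (hrR : r ≤ R) : r ^ (p - 1) / Gamma p ≤ p * R ^ p / (ρ * Gamma (p + 1)) := by
  have hr : 0 < r := hρ.trans_le hρr
  have hR : 0 < R := hr.trans_le hrR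
  have hΓ : 0 < Gamma p := Gamma_pos_of_pos hp
  calc r ^ (p - 1) / Gamma p = p * r ^ p / (r * (p * Gamma p)) := by
        rw [rpow_sub_one hr.ne']
        field_simp
    _ ≤ p * R ^ p / (ρ * (p * Gamma p)) := by gcongr
    _ = p * R ^ p / (ρ * Gamma (p + 1)) := by rw [Gamma_add_one hp.ne']

lemma hasDerivAt_mittagLeffler_mul_rpow (hα : 0 < α) (a : ℝ) {s : ℝ} (hs : 0 < s) :
    HasDerivAt (fun r => mittagLeffler α (a * r ^ α))
      (∑' k : ℕ, a ^ (k + 1) * (s ^ (α * (k + 1) - 1) / Gamma (α * (k + 1)))) s := by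
  set X := |a| * (2 * s) ^ α
  have hu := ((summable_nat_add_iff 1).2 (summable_natCast_mul_pow_div_Gamma hα X)).mul_left
    (2 * α / s)
  have hbound : ∀ (k : ℕ), ∀ r ∈ Ioo (s / 2) (2 * s),
      ‖a ^ (k + 1) * (r ^ (α * (k + 1) - 1) / Gamma (α * (k + 1)))‖ ≤
        2 * α / s * (((k + 1 : ℕ) : ℝ) * X ^ (k + 1) / Gamma (α * (k + 1 : ℕ) + 1)) := by
    intro k r hr
    have hp : 0 < α * (k + 1) := by positivity
    have hr0 : 0 < r := (half_pos hs).trans hr.1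
    rw [norm_mul, norm_pow, Real.norm_eq_abs,
      norm_of_nonneg (div_nonneg (rpow_nonneg hr0.le _) (Gamma_pos_of_pos hp).le), mul_pow,
      ← rpow_mul_natCast (by positivity)]
    push_cast
    calc |a| ^ (k + 1) * (r ^ (α * (k + 1) - 1) / Gamma (α * (k + 1)))
        ≤ |a| ^ (k + 1) * (α * (k + 1) * (2 * s) ^ (α * (k + 1)) /
            (s / 2 * Gamma (α * (k + 1) + 1))) :=
          mul_le_mul_of_nonneg_left
            (rpow_sub_one_div_Gamma_le hp (half_pos hs) hr.1.le hr.2.le) (by positivity)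
      _ = _ := by field_simp
  have hseries := hasDerivAt_tsum_of_isPreconnected (t := Ioo (s / 2) (2 * s)) hu isOpen_Ioo
    isPreconnected_Ioo
    (g := fun (k : ℕ) r => a ^ (k + 1) * (r ^ (α * (k + 1)) / Gamma (α * (k + 1) + 1)))
    (fun k r hr => (hasDerivAt_rpow_div_Gamma_add_one (by positivity)
      ((half_pos hs).trans hr.1)).const_mul _)
    hbound (y₀ := s) (y := s) ⟨by linarith, by linarith⟩
    (hasSum_mittagLeffler_mul_rpow_sub_one hα a hs.le).summable ⟨by linarith, by linarith⟩
  refine (hseries.const_add 1).congr_of_eventuallyEq ?_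
  filter_upwards [Ioi_mem_nhds hs] with r hr
  rw [(hasSum_mittagLeffler_mul_rpow_sub_one hα a hr.le).tsum_eq, add_sub_cancel]

end Series

section Caputo

variable {α t : ℝ}

lemma integrableOn_rpow_mul_sub_rpow_neg (hα : α < 1) (ht : 0 < t) {p : ℝ} (hp : 0 < p) :
    IntegrableOn (fun s : ℝ => s ^ (p - 1) * (t - s) ^ (-α)) (Ioo 0 t) := by
  simpa only [sub_sub_cancel_left] using integrableOn_rpow_mul_sub_rpow hp (sub_pos.2 hα) ht

lemma integral_rpow_mul_sub_rpow_neg (hα : α < 1) (ht : 0 < t) {p : ℝ} (hp : 0 < p) :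
    ∫ s in Ioo 0 t, s ^ (p - 1) * (t - s) ^ (-α) =
      Gamma p * Gamma (1 - α) / Gamma (p - α + 1) * t ^ (p - α) := by
  rw [← sub_sub_cancel_left 1 α, integral_rpow_mul_sub_rpow hp (sub_pos.2 hα) ht]
  ring_nf

lemma integral_deriv_mittagLeffler_mul_rpow_mul_sub_rpow (hα : α ∈ Ioo 0 1) (a : ℝ)
    (ht : 0 < t) :
    ∫ s in Ioo 0 t, deriv (fun r => mittagLeffler α (a * r ^ α)) s * (t - s) ^ (-α) =
      Gamma (1 - α) * a * mittagLeffler α (a * t ^ α) := by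
  set F : ℝ → ℕ → ℝ → ℝ := fun b k s =>
    b ^ (k + 1) / Gamma (α * (k + 1)) * (s ^ (α * (k + 1) - 1) * (t - s) ^ (-α))
  have hp : ∀ k : ℕ, 0 < α * (k + 1) := fun k => mul_pos hα.1 (by positivity)
  have hF_int : ∀ k, IntegrableOn (F a k) (Ioo 0 t) := fun k =>
    (integrableOn_rpow_mul_sub_rpow_neg hα.2 ht (hp k)).const_mul _
  have hF_integral : ∀ b k, ∫ s in Ioo 0 t, F b k s =
      Gamma (1 - α) * b * (b ^ k * (t ^ (α * k) / Gamma (α * k + 1))) := by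
    intro b k
    rw [integral_const_mul, integral_rpow_mul_sub_rpow_neg hα.2 ht (hp k),
      show α * (k + 1) - α = α * k by ring]
    field_simp [(Gamma_pos_of_pos (hp k)).ne']
    ring
  have hF_norm : ∀ k, ∀ s ∈ Ioo 0 t, ‖F a k s‖ = F |a| k s := by
    intro k s hs
    rw [norm_mul, norm_div, norm_pow, norm_of_nonneg (Gamma_pos_of_pos (hp k)).le,
      norm_of_nonneg (mul_nonneg (rpow_nonneg hs.1.le _) (rpow_nonneg (sub_pos.2 hs.2).le _)),
      Real.norm_eq_abs]
  have hsum : Summable fun k => ∫ s in Ioo 0 t, ‖F a k s‖ := by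
    simp_rw [setIntegral_congr_fun measurableSet_Ioo (hF_norm _), hF_integral]
    exact (hasSum_mittagLeffler_mul_rpow hα.1 |a| ht.le).summable.mul_left _
  have hderiv : ∀ s ∈ Ioo 0 t,
      deriv (fun r => mittagLeffler α (a * r ^ α)) s * (t - s) ^ (-α) = ∑' k, F a k s := by
    intro s hs
    rw [(hasDerivAt_mittagLeffler_mul_rpow hα.1 a hs.1).deriv, ← tsum_mul_right]
    exact tsum_congr fun k => by ring
  calc ∫ s in Ioo 0 t, deriv (fun r => mittagLeffler α (a * r ^ α)) s * (t - s) ^ (-α)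
      = ∫ s in Ioo 0 t, ∑' k, F a k s := setIntegral_congr_fun measurableSet_Ioo hderiv
    _ = ∑' k, ∫ s in Ioo 0 t, F a k s :=
      (integral_tsum_of_summable_integral_norm hF_int hsum).symm
    _ = Gamma (1 - α) * a * mittagLeffler α (a * t ^ α) := by
      simp_rw [hF_integral]
      rw [tsum_mul_left, (hasSum_mittagLeffler_mul_rpow hα.1 a ht.le).tsum_eq]

end Caputo

theorem mittagLeffler_solves_fractional_relaxation_general (α c : ℝ)
    (hα : α ∈ Ioo (0:ℝ) 1) :
    (∀ t : ℝ, 0 < t →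
      (1 / Real.Gamma (1 - α)) *
        ∫ s in Ioo (0:ℝ) t,
          deriv (fun r : ℝ => mittagLeffler α (-c * r ^ α)) s * (t - s) ^ (-α) =
      -c * mittagLeffler α (-c * t ^ α)) ∧
    mittagLeffler α (-c * (0:ℝ) ^ α) = 1 := by
  refine ⟨fun t ht => ?_, ?_⟩
  · rw [integral_deriv_mittagLeffler_mul_rpow_mul_sub_rpow hα (-c) ht]
    field_simp [(Gamma_pos_of_pos (sub_pos.2 hα.2)).ne']
  · rw [zero_rpow hα.1.ne', mul_zero, mittagLeffler_zero]

/-- For `α ∈ (0,1)` and `c ≥ 0`, `u(t) = E_α(-c t^α)` satisfies the fractional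
relaxation equation `D^α_t u(t) = -c u(t)` (Caputo derivative) for `t > 0`,
with `u(0) = 1`. -/
theorem mittagLeffler_solves_fractional_relaxation (α c : ℝ)
    (hα : α ∈ Ioo (0:ℝ) 1) (hc : 0 ≤ c) :
    (∀ t : ℝ, 0 < t →
      (1 / Real.Gamma (1 - α)) *
        ∫ s in Ioo (0:ℝ) t,
          deriv (fun r : ℝ => mittagLeffler α (-c * r ^ α)) s * (t - s) ^ (-α) =
      -c * mittagLeffler α (-c * t ^ α)) ∧
    mittagLeffler α (-c * (0:ℝ) ^ α) = 1 :=
  mittagLeffler_solves_fractional_relaxation_general α c hα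
end

section
/- Let g(t,z) = e^(−z²/(4t))/√(4πt) be the Gaussian kernel. For x, y > 0 and t > 0, ∫₀ᵗ (x/(t−τ)) g(t−τ, x) g(τ, y) dτ = g(t, x+y). -/
/-!
The substitution `u = (xτ - y(t - τ)) / √(τ(t - τ))` maps `(0, t)` increasingly onto `ℝ` and
completes the square in the exponent: `x²/(t - τ) + y²/τ = ((x + y)² + u²)/t`. In the variable `u`
the integrand becomes `g(t, x + y) (1 + u/√(u² + 4xy)) g(t, u)`; the odd factor `u/√(u² + 4xy)`
integrates to zero against the even kernel `g(t, ·)`, whose total mass is one.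
-/

open MeasureTheory Set Filter Topology Real

/-- The Gaussian heat kernel `g(t,z) = e^(-z²/(4t))/√(4πt)`. -/
noncomputable def heatKernel (t z : ℝ) : ℝ :=
  Real.exp (-z ^ 2 / (4 * t)) / Real.sqrt (4 * Real.pi * t)

theorem Function.Odd.integral_eq_zero {G E : Type*} [MeasurableSpace G] [AddGroup G]
    [MeasurableNeg G] [NormedAddCommGroup E] [NormedSpace ℝ E] {μ : Measure G} [μ.IsNegInvariant]
    {f : G → E} (hf : f.Odd) : ∫ x, f x ∂μ = 0 := by
  have h := integral_neg_eq_self f μ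
  simp only [hf.eq, integral_neg] at h
  have h2 : (2 : ℝ) • ∫ x, f x ∂μ = 0 := by
    rw [two_smul]
    nth_rewrite 1 [← h]
    exact neg_add_cancel _
  exact (smul_eq_zero.mp h2).resolve_left two_ne_zero

theorem heatKernel_eq_gaussianPDFReal {t : ℝ} (ht : 0 ≤ t) :
    heatKernel t = ProbabilityTheory.gaussianPDFReal 0 (2 * t).toNNReal := by
  ext z
  rw [heatKernel, ProbabilityTheory.gaussianPDFReal, Real.coe_toNNReal _ (by positivity)]
  ring_nf

theorem integral_one_add_mul_heatKernel_of_odd {t C : ℝ} (ht : 0 < t) {φ : ℝ → ℝ} (hφ : φ.Odd)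
    (hφ_meas : AEStronglyMeasurable φ) (hφ_bdd : ∀ u, |φ u| ≤ C) :
    ∫ u, (1 + φ u) * heatKernel t u = 1 := by
  have hg : Integrable (heatKernel t) := by
    rw [heatKernel_eq_gaussianPDFReal ht.le]
    exact ProbabilityTheory.integrable_gaussianPDFReal _ _
  have hφg : Integrable fun u => φ u * heatKernel t u :=
    hg.bdd_mul hφ_meas (Eventually.of_forall hφ_bdd)
  have hφg_odd : (fun u => φ u * heatKernel t u).Odd := fun u => by simp [hφ.eq u, heatKernel]
  simp only [add_mul, one_mul]
  rw [integral_add hg hφg, hφg_odd.integral_eq_zero, add_zero, heatKernel_eq_gaussianPDFReal ht.le,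
    ProbabilityTheory.integral_gaussianPDFReal_eq_one _ (by positivity)]

theorem abs_div_sqrt_sq_add_le_one {c : ℝ} (hc : 0 ≤ c) (u : ℝ) : |u / √(u ^ 2 + c)| ≤ 1 := by
  rw [abs_div, abs_of_nonneg (Real.sqrt_nonneg _)]
  exact div_le_one_of_le₀ (Real.abs_le_sqrt (by linarith)) (Real.sqrt_nonneg _)

noncomputable def hittingSubst (x y t τ : ℝ) : ℝ := (x * τ - y * (t - τ)) / √(τ * (t - τ))

section
variable {x y t τ : ℝ}

theorem hittingSubst_sub (x y t τ : ℝ) : hittingSubst x y t (t - τ) = -hittingSubst y x t τ := by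
  rw [hittingSubst, hittingSubst, sub_sub_cancel, mul_comm (t - τ), ← neg_div]
  ring_nf

theorem hasDerivAt_hittingSubst (hτ : τ ∈ Ioo 0 t) :
    HasDerivAt (hittingSubst x y t)
      (t * (x * τ + y * (t - τ)) / (2 * √(τ * (t - τ)) ^ 3)) τ := by
  have hp : 0 < τ * (t - τ) := mul_pos hτ.1 (sub_pos.2 hτ.2)
  have hs : 0 < √(τ * (t - τ)) := Real.sqrt_pos.2 hp
  have hs2 : √(τ * (t - τ)) ^ 2 = τ * (t - τ) := Real.sq_sqrt hp.le
  have hnum : HasDerivAt (fun τ => x * τ - y * (t - τ)) (x + y) τ :=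
    (((hasDerivAt_id' τ).const_mul x).fun_sub
      (((hasDerivAt_id' τ).const_sub t).const_mul y)).congr_deriv (by ring)
  have hden : HasDerivAt (fun τ => τ * (t - τ)) (t - 2 * τ) τ :=
    ((hasDerivAt_id' τ).fun_mul ((hasDerivAt_id' τ).const_sub t)).congr_deriv (by ring)
  refine (hnum.fun_div (hden.sqrt hp.ne') hs.ne').congr_deriv ?_
  field_simp
  linear_combination (2 * (x + y)) * hs2

theorem strictMonoOn_hittingSubst (hx : 0 < x) (hy : 0 < y) :
    StrictMonoOn (hittingSubst x y t) (Ioo 0 t) := by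
  refine strictMonoOn_of_hasDerivWithinAt_pos (convex_Ioo 0 t)
    (fun τ hτ => (hasDerivAt_hittingSubst hτ).continuousAt.continuousWithinAt)
    (fun τ hτ => (hasDerivAt_hittingSubst (interior_subset hτ)).hasDerivWithinAt) ?_
  intro τ hτ
  rw [interior_Ioo] at hτ
  have hM : 0 < x * τ + y * (t - τ) := by nlinarith [hτ.1, sub_pos.2 hτ.2]
  have hs : 0 < √(τ * (t - τ)) := Real.sqrt_pos.2 (mul_pos hτ.1 (sub_pos.2 hτ.2))
  exact div_pos (mul_pos (hτ.1.trans hτ.2) hM) (by positivity)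

theorem tendsto_hittingSubst_nhdsGT_zero (hy : 0 < y) (ht : 0 < t) :
    Tendsto (hittingSubst x y t) (𝓝[>] 0) atBot := by
  have hnum : Tendsto (fun τ => x * τ - y * (t - τ)) (𝓝[>] 0) (𝓝 (-(y * t))) :=
    tendsto_nhdsWithin_of_tendsto_nhds <|
      (by fun_prop : Continuous fun τ : ℝ => x * τ - y * (t - τ)).tendsto' 0 _ (by ring)
  have hden : Tendsto (fun τ => √(τ * (t - τ))) (𝓝[>] 0) (𝓝[>] 0) := by
    refine tendsto_nhdsWithin_iff.2 ⟨tendsto_nhdsWithin_of_tendsto_nhds ?_, ?_⟩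
    · exact (by fun_prop : Continuous fun τ : ℝ => √(τ * (t - τ))).tendsto' 0 0 (by simp)
    · filter_upwards [Ioo_mem_nhdsGT ht] with τ hτ
      exact Real.sqrt_pos.2 (mul_pos hτ.1 (sub_pos.2 hτ.2))
  exact (hnum.neg_mul_atTop (by simp [hy, ht]) (tendsto_inv_nhdsGT_zero.comp hden)).congr
    fun τ => (div_eq_mul_inv _ _).symm

theorem tendsto_hittingSubst_nhdsLT (hx : 0 < x) (ht : 0 < t) :
    Tendsto (hittingSubst x y t) (𝓝[<] t) atTop := by
  have hreflect : Tendsto (fun τ => t - τ) (𝓝[<] t) (𝓝[>] 0) := by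
    have h := (Filter.map_subLeft_nhdsLT (c := t) (a := t)).le
    rwa [sub_self] at h
  refine ((tendsto_neg_atBot_atTop.comp (tendsto_hittingSubst_nhdsGT_zero (x := y) hx ht)).comp
    hreflect).congr fun τ => ?_
  simp [hittingSubst_sub]

theorem image_hittingSubst (hx : 0 < x) (hy : 0 < y) (ht : 0 < t) :
    hittingSubst x y t '' Ioo 0 t = univ :=
  univ_subset_iff.1 <| ContinuousOn.surjOn_of_tendsto (nonempty_Ioo.2 ht)
    (fun τ hτ => (hasDerivAt_hittingSubst hτ).continuousAt.continuousWithinAt)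
    (by rw [tendsto_comp_coe_Ioo_atBot ht]; exact tendsto_hittingSubst_nhdsGT_zero hy ht)
    (by rw [tendsto_comp_coe_Ioo_atTop ht]; exact tendsto_hittingSubst_nhdsLT hx ht)

theorem heatKernel_mul_heatKernel_eq (x y : ℝ) (hτ : τ ∈ Ioo 0 t) :
    heatKernel (t - τ) x * heatKernel τ y =
      t / √(τ * (t - τ)) * (heatKernel t (x + y) * heatKernel t (hittingSubst x y t τ)) := by
  have ht : 0 < t := hτ.1.trans hτ.2
  have hτt : 0 < t - τ := sub_pos.2 hτ.2
  have hp : 0 < τ * (t - τ) := mul_pos hτ.1 hτt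
  have hτ0 := hτ.1.ne'
  have hτt' := hτt.ne'
  have hexp : -x ^ 2 / (4 * (t - τ)) + -y ^ 2 / (4 * τ) =
      -(x + y) ^ 2 / (4 * t) + -hittingSubst x y t τ ^ 2 / (4 * t) := by
    rw [hittingSubst, div_pow, Real.sq_sqrt hp.le]
    field_simp
    ring
  have hsqrt : √(4 * π * (t - τ)) * √(4 * π * τ) = 4 * π * √(τ * (t - τ)) := by
    rw [← Real.sqrt_mul (by positivity),
      show 4 * π * (t - τ) * (4 * π * τ) = (4 * π) ^ 2 * (τ * (t - τ)) by ring,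
      Real.sqrt_mul (by positivity), Real.sqrt_sq (by positivity)]
  have hsqrt_t : √(4 * π * t) * √(4 * π * t) = 4 * π * t := Real.mul_self_sqrt (by positivity)
  simp only [heatKernel]
  rw [div_mul_div_comm, div_mul_div_comm, ← Real.exp_add, ← Real.exp_add, hexp, hsqrt, hsqrt_t]
  field_simp

theorem sqrt_hittingSubst_sq_add (hx : 0 < x) (hy : 0 < y) (hτ : τ ∈ Ioo 0 t) :
    √(hittingSubst x y t τ ^ 2 + 4 * (x * y)) = (x * τ + y * (t - τ)) / √(τ * (t - τ)) := by
  have hp : 0 < τ * (t - τ) := mul_pos hτ.1 (sub_pos.2 hτ.2)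
  have hM : 0 < x * τ + y * (t - τ) := by nlinarith [hτ.1, sub_pos.2 hτ.2]
  have hτ0 := hτ.1.ne'
  have hτt := (sub_pos.2 hτ.2).ne'
  rw [← Real.sqrt_sq (div_pos hM (Real.sqrt_pos.2 hp)).le, hittingSubst, div_pow, div_pow,
    Real.sq_sqrt hp.le]
  congr 1
  field_simp
  ring

theorem hitting_integrand_eq_abs_deriv_smul (hx : 0 < x) (hy : 0 < y) (hτ : τ ∈ Ioo 0 t) :
    x / (t - τ) * heatKernel (t - τ) x * heatKernel τ y =
      |deriv (hittingSubst x y t) τ| • (heatKernel t (x + y) *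
        ((1 + hittingSubst x y t τ / √(hittingSubst x y t τ ^ 2 + 4 * (x * y))) *
          heatKernel t (hittingSubst x y t τ))) := by
  have hτt : 0 < t - τ := sub_pos.2 hτ.2
  have hp : 0 < τ * (t - τ) := mul_pos hτ.1 hτt
  have hs : 0 < √(τ * (t - τ)) := Real.sqrt_pos.2 hp
  have hs2 : √(τ * (t - τ)) ^ 2 = τ * (t - τ) := Real.sq_sqrt hp.le
  have hM : 0 < x * τ + y * (t - τ) := by nlinarith [hτ.1]
  have hweight : 1 + hittingSubst x y t τ / √(hittingSubst x y t τ ^ 2 + 4 * (x * y)) =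
      2 * x * τ / (x * τ + y * (t - τ)) := by
    rw [sqrt_hittingSubst_sq_add hx hy hτ, hittingSubst, div_div_div_cancel_right₀ hs.ne']
    field_simp
    ring
  rw [mul_assoc, heatKernel_mul_heatKernel_eq x y hτ, (hasDerivAt_hittingSubst hτ).deriv,
    abs_of_pos (div_pos (mul_pos (hτ.1.trans hτ.2) hM) (by positivity)), smul_eq_mul, hweight]
  generalize x * τ + y * (t - τ) = M at hM ⊢
  field_simp
  rw [hs2]
  ring

end

/-- Convolution identity: for `x, y, t > 0`,
`∫₀ᵗ (x/(t-τ)) g(t-τ,x) g(τ,y) dτ = g(t,x+y)`. -/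
theorem heatKernel_hitting_convolution (x y t : ℝ) (hx : 0 < x) (hy : 0 < y)
    (ht : 0 < t) :
    ∫ τ in Ioo (0:ℝ) t, (x / (t - τ)) * heatKernel (t - τ) x * heatKernel τ y
      = heatKernel t (x + y) := by
  set φ := hittingSubst x y t
  set G : ℝ → ℝ := fun u =>
    heatKernel t (x + y) * ((1 + u / √(u ^ 2 + 4 * (x * y))) * heatKernel t u)
  have hφ' (τ : ℝ) (hτ : τ ∈ Ioo 0 t) : HasDerivWithinAt φ (deriv φ τ) (Ioo 0 t) τ :=
    (hasDerivAt_hittingSubst hτ).differentiableAt.hasDerivAt.hasDerivWithinAt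
  calc _ = ∫ τ in Ioo 0 t, |deriv φ τ| • G (φ τ) :=
        setIntegral_congr_fun measurableSet_Ioo fun _ hτ =>
          hitting_integrand_eq_abs_deriv_smul hx hy hτ
    _ = ∫ u in φ '' Ioo 0 t, G u :=
        (integral_image_eq_integral_abs_deriv_smul measurableSet_Ioo hφ'
          (strictMonoOn_hittingSubst hx hy).injOn G).symm
    _ = ∫ u, G u := by rw [image_hittingSubst hx hy ht, setIntegral_univ]
    _ = heatKernel t (x + y) := by
        rw [integral_const_mul, integral_one_add_mul_heatKernel_of_odd ht
          (fun u => by simp [neg_div])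
          (by fun_prop : Measurable fun u : ℝ => u / √(u ^ 2 + 4 * (x * y))).aestronglyMeasurable
          (abs_div_sqrt_sq_add_le_one (by positivity)), mul_one]
end

section
/- Let α ∈ (0,1), σ ≥ 0, and let l(t,w) be the density of the inverse α-stable subordinator with ∫₀^∞ e^(−λt) l(t,w) dt = λ^(α−1) e^(−w λ^α), and h(w,t) = α(w/t) l(t,w) the stable subordinator density. Define l̄(t,w) = σ h(w, t−σw) + l(t−σw, w) for t ≥ σw ≥ 0 (and 0 otherwise). Then ∫₀^∞ e^(−λt) l̄(t,w) dt = (σ + λ^(α−1)) e^(−σwλ − w λ^α) = ((σλ + λ^α)/λ) e^(−σwλ − wλ^α) for all λ > 0, w > 0. -/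
open MeasureTheory Set

/-- Laplace transform of the density of the inverse of a drifted stable
subordinator. Given the density `l` of the inverse `α`-stable subordinator with
`∫₀^∞ e^(-λt) l(t,w) dt = λ^(α-1) e^(-wλ^α)` and `h(w,t) = α(w/t)l(t,w)` with
`∫₀^∞ e^(-λt) h(w,t) dt = e^(-wλ^α)`, the function
`l̄(t,w) = σ h(w, t-σw) + l(t-σw, w)` for `t ≥ σw` (and `0` otherwise)
satisfies `∫₀^∞ e^(-λt) l̄(t,w) dt = (σ + λ^(α-1)) e^(-σwλ - wλ^α)`. -/
theorem laplace_inverse_drifted_subordinator (α σ : ℝ) (hα : α ∈ Ioo (0:ℝ) 1)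
    (hσ : 0 ≤ σ) (l : ℝ → ℝ → ℝ)
    (hl : ∀ lam > (0:ℝ), ∀ w > (0:ℝ),
      ∫ t in Ioi (0:ℝ), Real.exp (-lam * t) * l t w
        = lam ^ (α - 1) * Real.exp (-w * lam ^ α))
    (hh : ∀ lam > (0:ℝ), ∀ w > (0:ℝ),
      ∫ t in Ioi (0:ℝ), Real.exp (-lam * t) * (α * (w / t) * l t w)
        = Real.exp (-w * lam ^ α)) :
    ∀ lam > (0:ℝ), ∀ w > (0:ℝ),
      ∫ t in Ioi (0:ℝ), Real.exp (-lam * t) *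
          (if σ * w ≤ t then
            σ * (α * (w / (t - σ * w)) * l (t - σ * w) w) + l (t - σ * w) w
          else 0)
        = (σ + lam ^ (α - 1)) * Real.exp (-σ * w * lam - w * lam ^ α) := by
  intro lam hlam w hw
  set c := σ * w with hc
  have hc0 : 0 ≤ c := mul_nonneg hσ hw.le
  -- the shifted function
  set G : ℝ → ℝ := fun s =>
    Real.exp (-lam * (s + c)) *
      (σ * (α * (w / s) * l s w) + l s w) with hG
  -- Step 1: the integrand a.e. equals the indicator of `Ioi c` of `F'`
  have step1 : (∫ t in Ioi (0:ℝ), Real.exp (-lam * t) *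
          (if c ≤ t then
            σ * (α * (w / (t - c)) * l (t - c) w) + l (t - c) w
          else 0))
      = ∫ t in Ioi c, Real.exp (-lam * t) *
          (σ * (α * (w / (t - c)) * l (t - c) w) + l (t - c) w) := by
    rw [show Ioi c = Ioi (0:ℝ) ∩ Ioi c from
      (inter_eq_right.2 (fun x hx => lt_of_le_of_lt hc0 hx)).symm,
      ← setIntegral_indicator measurableSet_Ioi]
    apply setIntegral_congr_ae measurableSet_Ioi
    have : ∀ᵐ t : ℝ, t ≠ c := by
      filter_upwards [compl_mem_ae_iff.2 (measure_singleton c)] with t ht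
      simpa using ht
    filter_upwards [this] with t ht _
    by_cases h : c ≤ t
    · have : t ∈ Ioi c := lt_of_le_of_ne h (Ne.symm ht)
      rw [if_pos h, indicator_of_mem this]
    · rw [if_neg h, indicator_of_notMem (by simpa using not_lt.2 (le_of_not_ge h)), mul_zero]
  -- Step 2: substitution t = s + c
  have step2 : (∫ t in Ioi c, Real.exp (-lam * t) *
          (σ * (α * (w / (t - c)) * l (t - c) w) + l (t - c) w))
      = ∫ s in Ioi (0:ℝ), G s := by
    have hmp : MeasurePreserving (fun s : ℝ => s + c) volume volume :=
      measurePreserving_add_right volume c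
    have hemb : MeasurableEmbedding (fun s : ℝ => s + c) :=
      (MeasurableEquiv.addRight c).measurableEmbedding
    have hpre : (fun s : ℝ => s + c) ⁻¹' Ioi c = Ioi (0:ℝ) := by
      ext s; simp
    rw [← hmp.setIntegral_preimage_emb hemb, hpre]
    apply setIntegral_congr_ae measurableSet_Ioi
    filter_upwards with s _
    simp [G, add_sub_cancel_right]
  -- integrability of the two pieces
  have hhval := hh lam hlam w hw
  have hlval := hl lam hlam w hw
  have Ih : Integrable (fun t => Real.exp (-lam * t) * (α * (w / t) * l t w))
      (volume.restrict (Ioi (0:ℝ))) := by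
    by_contra h
    rw [integral_undef h] at hhval
    exact (Real.exp_pos _).ne' hhval.symm
  have Il : Integrable (fun t => Real.exp (-lam * t) * l t w)
      (volume.restrict (Ioi (0:ℝ))) := by
    by_contra h
    rw [integral_undef h] at hlval
    exact absurd hlval.symm
      (mul_pos (Real.rpow_pos_of_pos hlam _) (Real.exp_pos _)).ne'
  -- Step 3: compute
  have step3 : (∫ s in Ioi (0:ℝ), G s)
      = Real.exp (-lam * c) *
        (σ * Real.exp (-w * lam ^ α) + lam ^ (α - 1) * Real.exp (-w * lam ^ α)) := by
    have hGeq : ∀ s : ℝ, G s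
        = Real.exp (-lam * c) * (σ * (Real.exp (-lam * s) * (α * (w / s) * l s w))
            + Real.exp (-lam * s) * l s w) := by
      intro s
      simp only [G]
      rw [show -lam * (s + c) = -lam * c + -lam * s by ring, Real.exp_add]
      ring
    simp_rw [hGeq]
    rw [integral_const_mul, integral_add ((Ih.const_mul σ)) Il,
      integral_const_mul, hhval, hlval]
  rw [step1, step2, step3]
  rw [show -σ * w * lam - w * lam ^ α = -lam * c + -w * lam ^ α by rw [hc]; ring,
    Real.exp_add]
  ring
end

section
/- Let α ∈ (0,1], η > 0, σ ≥ 0, c ≥ 0, and f ∈ W^{1,1}₀([0,∞)) (f and f′ integrable, f(0)=0). The double Laplace transform of the function v(t,x) = ∫₀ˣ f(x−y) h̄(t,y) dy, where h̄(t,·) is the density of H̄_t = σt + H_t with H an α-stable subordinator, equals ṽ(λ,ξ) = f̃(ξ)/(λ + σξ + ξ^α), where f̃ is the Laplace transform of f. Consequently v solves ∂v/∂t = −σ ∂v/∂x − 𝒟^α_x v with v(0,x) = f(x), where 𝒟^α_x is the Riemann–Liouville derivative. -/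
open MeasureTheory Set

/-- Double Laplace transform of `v(t,x) = ∫₀ˣ f(x-y) h̄(t,y) dy`, where
`h̄(t,·)` is the density of the drifted stable subordinator `H̄_t = σt + H_t`
(with Laplace transform `e^(-t(σξ + ξ^α))`) and `f ∈ W^{1,1}₀([0,∞))`:
`ṽ(λ,ξ) = f̃(ξ)/(λ + σξ + ξ^α)`. -/
theorem double_laplace_drifted_subordinator_convolution
    (α σ : ℝ) (hα : α ∈ Ioc (0:ℝ) 1) (hσ : 0 ≤ σ)
    (f : ℝ → ℝ)
    (hf_int : IntegrableOn f (Ioi 0))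
    (hf_deriv_int : IntegrableOn (deriv f) (Ioi 0))
    (hf0 : f 0 = 0)
    (hbar : ℝ → ℝ → ℝ)
    (hhbar : ∀ t > (0:ℝ), ∀ ξ > (0:ℝ),
      ∫ y in Ioi (0:ℝ), Real.exp (-ξ * y) * hbar t y
        = Real.exp (-t * (σ * ξ + ξ ^ α))) :
    ∀ lam > (0:ℝ), ∀ ξ > (0:ℝ),
      ∫ t in Ioi (0:ℝ), ∫ x in Ioi (0:ℝ),
          Real.exp (-lam * t - ξ * x) * ∫ y in Ioo (0:ℝ) x, f (x - y) * hbar t y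
        = (∫ y in Ioi (0:ℝ), Real.exp (-ξ * y) * f y) / (lam + σ * ξ + ξ ^ α) := by
  intro lam hlam ξ hξ
  set s : ℝ := σ * ξ + ξ ^ α with hs_def
  have hs : 0 < s := by
    have h1 : 0 < ξ ^ α := Real.rpow_pos_of_pos hξ α
    have h2 : 0 ≤ σ * ξ := mul_nonneg hσ hξ.le
    positivity
  have hls : 0 < lam + s := by linarith
  set ftil : ℝ := ∫ y in Ioi (0:ℝ), Real.exp (-ξ * y) * f y with hftil_def
  -- integrability of the exponentially weighted f
  have hF : IntegrableOn (fun z => Real.exp (-ξ * z) * f z) (Ioi 0) := by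
    refine Integrable.mono' hf_int.norm ?_ ?_
    · exact ((Real.continuous_exp.comp (continuous_const.mul continuous_id)).aestronglyMeasurable.mul
        hf_int.aestronglyMeasurable)
    · filter_upwards [ae_restrict_mem measurableSet_Ioi] with z hz
      have h1 : Real.exp (-ξ * z) ≤ 1 := by
        apply Real.exp_le_one_iff.mpr
        have : 0 < ξ * z := mul_pos hξ hz
        linarith
      have h2 : 0 < Real.exp (-ξ * z) := Real.exp_pos _
      rw [norm_mul, Real.norm_eq_abs, abs_of_pos h2]
      calc Real.exp (-ξ * z) * ‖f z‖ ≤ 1 * ‖f z‖ := by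
            exact mul_le_mul_of_nonneg_right h1 (norm_nonneg _)
        _ = ‖f z‖ := one_mul _
  -- integrability of the exponentially weighted hbar t, for t > 0
  have hG : ∀ t > (0:ℝ), IntegrableOn (fun y => Real.exp (-ξ * y) * hbar t y) (Ioi 0) := by
    intro t ht
    by_contra h
    have := hhbar t ht ξ hξ
    rw [integral_undef h] at this
    exact (Real.exp_pos _).ne' this.symm
  -- inner Laplace transform at each t > 0
  have key : ∀ t ∈ Ioi (0:ℝ),
      (∫ x in Ioi (0:ℝ), Real.exp (-lam * t - ξ * x)
          * ∫ y in Ioo (0:ℝ) x, f (x - y) * hbar t y)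
        = Real.exp (-lam * t) * (ftil * Real.exp (-t * s)) := by
    intro t ht
    have conv := integral_posConvolution (μ := volume) (ν := volume)
      hF (hG t ht) (ContinuousLinearMap.mul ℝ ℝ)
    simp only [ContinuousLinearMap.mul_apply'] at conv
    rw [hhbar t ht ξ hξ] at conv
    have hx_eq : ∀ x ∈ Ioi (0:ℝ),
        Real.exp (-lam * t - ξ * x) * ∫ y in Ioo (0:ℝ) x, f (x - y) * hbar t y
          = Real.exp (-lam * t) * ∫ u in (0:ℝ)..x,
              (Real.exp (-ξ * u) * f u) * (Real.exp (-ξ * (x - u)) * hbar t (x - u)) := by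
      intro x hx
      have hx0 : (0:ℝ) ≤ x := le_of_lt hx
      have step1 : (∫ u in (0:ℝ)..x,
            (Real.exp (-ξ * u) * f u) * (Real.exp (-ξ * (x - u)) * hbar t (x - u)))
          = Real.exp (-ξ * x) * ∫ u in (0:ℝ)..x, f u * hbar t (x - u) := by
        rw [← intervalIntegral.integral_const_mul]
        apply intervalIntegral.integral_congr
        intro u _
        have : Real.exp (-ξ * u) * Real.exp (-ξ * (x - u)) = Real.exp (-ξ * x) := by
          rw [← Real.exp_add]; ring_nf
        calc (Real.exp (-ξ * u) * f u) * (Real.exp (-ξ * (x - u)) * hbar t (x - u))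
            = (Real.exp (-ξ * u) * Real.exp (-ξ * (x - u))) * (f u * hbar t (x - u)) := by ring
          _ = Real.exp (-ξ * x) * (f u * hbar t (x - u)) := by rw [this]
      have step2 : (∫ u in (0:ℝ)..x, f u * hbar t (x - u))
          = ∫ y in (0:ℝ)..x, f (x - y) * hbar t y := by
        have := intervalIntegral.integral_comp_sub_left
          (a := (0:ℝ)) (b := x) (fun y => f (x - y) * hbar t y) x
        simp only [sub_self, sub_zero] at this
        rw [← this]
        apply intervalIntegral.integral_congr
        intro u _
        simp [sub_sub_cancel]
      have step3 : (∫ y in (0:ℝ)..x, f (x - y) * hbar t y)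
          = ∫ y in Ioo (0:ℝ) x, f (x - y) * hbar t y := by
        rw [intervalIntegral.integral_of_le hx0, integral_Ioc_eq_integral_Ioo]
      rw [step1, step2, step3, ← mul_assoc, ← Real.exp_add]
      ring_nf
    rw [setIntegral_congr_fun measurableSet_Ioi hx_eq, integral_const_mul, conv]
  rw [setIntegral_congr_fun measurableSet_Ioi key]
  have exp_eq : ∀ t : ℝ,
      Real.exp (-lam * t) * (ftil * Real.exp (-t * s))
        = ftil * Real.exp (-((lam + s) * t)) := by
    intro t
    rw [mul_comm ftil, ← mul_assoc, ← Real.exp_add]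
    ring_nf
  simp_rw [exp_eq]
  rw [integral_const_mul]
  have hint : (∫ t in Ioi (0:ℝ), Real.exp (-((lam + s) * t))) = (lam + s)⁻¹ := by
    have := integral_comp_mul_left_Ioi (fun u => Real.exp (-u)) 0 hls
    simp only [mul_zero, smul_eq_mul] at this
    rw [this, integral_exp_neg_Ioi_zero, mul_one]
  rw [hint, hs_def]
  rw [div_eq_mul_inv]
  ring_nf
end
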